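/- For every closed PGA term t, there exists a closed PGA term t' in first canonical form such that the equation t = t' is derivable from the axioms PGA1–PGA4. -/
import Mathlib


/-- Primitive instructions over a set `A` of basic instructions. -/
inductive PrimInstr (A : Type) : Type where
  | basic : A → PrimInstr A
  | pos : A → PrimInstr A
  | neg : A → PrimInstr A
  | jump : Nat → PrimInstr A
  | halt : PrimInstr A

/-- Closed PGA terms over a set `A` of basic instructions. -/
inductive PGATerm (A : Type) : Type where
  | instr : PrimInstr A → PGATerm A
  | concat : PGATerm A → PGATerm A → PGATerm A
  | rep : PGATerm A → PGATerm A

/-- `t.pow n` is the `(n+1)`-fold concatenation `t^(n+1)` (so powers are ≥ 1). -/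
def PGATerm.pow {A : Type} (t : PGATerm A) : Nat → PGATerm A
  | 0 => t
  | n + 1 => PGATerm.concat t (PGATerm.pow t n)

/-- `chain us t` is `u_1 ; u_2 ; … ; u_k ; t`. -/
def chain {A : Type} (us : List (PrimInstr A)) (t : PGATerm A) : PGATerm A :=
  us.foldr (fun u s => PGATerm.concat (PGATerm.instr u) s) t

/-- `ofList u us` is the term `u ; u_1 ; … ; u_k` (a nonempty sequence of instructions). -/
def ofList {A : Type} : PrimInstr A → List (PrimInstr A) → PGATerm A
  | u, [] => PGATerm.instr u
  | u, v :: vs => PGATerm.concat (PGATerm.instr u) (ofList v vs)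

/-- Equational-logic derivability from the axioms PGA1–PGA4 (when `full = false`) or
PGA1–PGA8 (when `full = true`). -/
inductive PGADeriv {A : Type} (full : Bool) : PGATerm A → PGATerm A → Prop where
  | refl (t : PGATerm A) : PGADeriv full t t
  | symm {t s : PGATerm A} : PGADeriv full t s → PGADeriv full s t
  | trans {t s r : PGATerm A} : PGADeriv full t s → PGADeriv full s r → PGADeriv full t r
  | concat_congr {t t' s s' : PGATerm A} : PGADeriv full t t' → PGADeriv full s s' →
      PGADeriv full (PGATerm.concat t s) (PGATerm.concat t' s')
  | rep_congr {t t' : PGATerm A} : PGADeriv full t t' →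
      PGADeriv full (PGATerm.rep t) (PGATerm.rep t')
  | pga1 (t s r : PGATerm A) :
      PGADeriv full (PGATerm.concat (PGATerm.concat t s) r)
        (PGATerm.concat t (PGATerm.concat s r))
  | pga2 (t : PGATerm A) (n : Nat) :
      PGADeriv full (PGATerm.rep (PGATerm.pow t n)) (PGATerm.rep t)
  | pga3 (t s : PGATerm A) :
      PGADeriv full (PGATerm.concat (PGATerm.rep t) s) (PGATerm.rep t)
  | pga4 (t s : PGATerm A) :
      PGADeriv full (PGATerm.rep (PGATerm.concat t s))
        (PGATerm.concat t (PGATerm.rep (PGATerm.concat s t)))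
  | pga5 (us : List (PrimInstr A)) (h : full = true) :
      PGADeriv full
        (PGATerm.concat (PGATerm.instr (PrimInstr.jump (us.length + 1)))
          (chain us (PGATerm.instr (PrimInstr.jump 0))))
        (PGATerm.concat (PGATerm.instr (PrimInstr.jump 0))
          (chain us (PGATerm.instr (PrimInstr.jump 0))))
  | pga6 (us : List (PrimInstr A)) (l : Nat) (h : full = true) :
      PGADeriv full
        (PGATerm.concat (PGATerm.instr (PrimInstr.jump (us.length + 1)))
          (chain us (PGATerm.instr (PrimInstr.jump l))))
        (PGATerm.concat (PGATerm.instr (PrimInstr.jump (l + us.length + 1)))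
          (chain us (PGATerm.instr (PrimInstr.jump l))))
  | pga7 (us : List (PrimInstr A)) (l : Nat) (h : full = true) :
      PGADeriv full (PGATerm.rep (ofList (PrimInstr.jump (l + us.length + 1)) us))
        (PGATerm.rep (ofList (PrimInstr.jump l) us))
  | pga8 (us : List (PrimInstr A)) (v : PrimInstr A) (vs : List (PrimInstr A)) (l : Nat)
      (h : full = true) :
      PGADeriv full
        (PGATerm.concat (PGATerm.instr (PrimInstr.jump (l + us.length + vs.length + 2)))
          (chain us (PGATerm.rep (ofList v vs))))
        (PGATerm.concat (PGATerm.instr (PrimInstr.jump (l + us.length + 1)))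
          (chain us (PGATerm.rep (ofList v vs))))
/-- A PGA term is repetition-free if the repetition operator does not occur in it. -/
def RepFree {A : Type} : PGATerm A → Prop
  | PGATerm.instr _ => True
  | PGATerm.concat t s => RepFree t ∧ RepFree s
  | PGATerm.rep _ => False
/-- A closed PGA term is in first canonical form if it is repetition-free or of the form
`s ; (s')^ω` with `s` and `s'` repetition-free. -/
def FirstCanonical {A : Type} (t : PGATerm A) : Prop :=
  RepFree t ∨ ∃ s s' : PGATerm A, RepFree s ∧ RepFree s' ∧ t = PGATerm.concat s (PGATerm.rep s')

lemma pga_unfold {A : Type} (Y : PGATerm A) :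
    PGADeriv false (PGATerm.rep Y) (PGATerm.concat Y (PGATerm.rep Y)) := by
  have h1 : PGADeriv false (PGATerm.rep Y) (PGATerm.rep (PGATerm.pow Y 1)) :=
    PGADeriv.symm (PGADeriv.pga2 Y 1)
  have h2 : PGADeriv false (PGATerm.rep (PGATerm.pow Y 1))
      (PGATerm.concat Y (PGATerm.rep (PGATerm.concat Y Y))) := by
    show PGADeriv false (PGATerm.rep (PGATerm.concat Y (PGATerm.pow Y 0))) _
    exact PGADeriv.pga4 Y Y
  have h3 : PGADeriv false (PGATerm.rep (PGATerm.concat Y Y)) (PGATerm.rep Y) :=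
    PGADeriv.pga2 Y 1
  exact (h1.trans h2).trans (PGADeriv.concat_congr (PGADeriv.refl Y) h3)

lemma pga_rep_rep {A : Type} (Y : PGATerm A) :
    PGADeriv false (PGATerm.rep (PGATerm.rep Y)) (PGATerm.rep Y) :=
  (pga_unfold (PGATerm.rep Y)).trans (PGADeriv.pga3 Y (PGATerm.rep (PGATerm.rep Y)))

/-- every closed PGA term is provably (from PGA1–PGA4) equal to a term in
first canonical form. -/
theorem pga_first_canonical_form (A : Type) (hA : Nonempty A) (t : PGATerm A) :
    ∃ t' : PGATerm A, FirstCanonical t' ∧ PGADeriv false t t' := by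
  induction t with
  | instr u => exact ⟨PGATerm.instr u, Or.inl trivial, PGADeriv.refl _⟩
  | concat t s iht ihs =>
    obtain ⟨t1, hc1, d1⟩ := iht
    obtain ⟨s1, hc2, d2⟩ := ihs
    have d : PGADeriv false (PGATerm.concat t s) (PGATerm.concat t1 s1) :=
      PGADeriv.concat_congr d1 d2
    rcases hc1 with hrf1 | ⟨a, b, ha, hb, rfl⟩
    · rcases hc2 with hrf2 | ⟨a, b, ha, hb, rfl⟩
      · exact ⟨PGATerm.concat t1 s1, Or.inl (show RepFree t1 ∧ RepFree s1 from ⟨hrf1, hrf2⟩), d⟩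
      · refine ⟨PGATerm.concat (PGATerm.concat t1 a) (PGATerm.rep b),
          Or.inr ⟨PGATerm.concat t1 a, b, show RepFree t1 ∧ RepFree a from ⟨hrf1, ha⟩, hb, rfl⟩, d.trans ?_⟩
        exact PGADeriv.symm (PGADeriv.pga1 t1 a (PGATerm.rep b))
    · refine ⟨PGATerm.concat a (PGATerm.rep b), Or.inr ⟨_, _, ha, hb, rfl⟩, d.trans ?_⟩
      exact (PGADeriv.pga1 a (PGATerm.rep b) s1).trans
        (PGADeriv.concat_congr (PGADeriv.refl a) (PGADeriv.pga3 b s1))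
  | rep t ih =>
    obtain ⟨t1, hc, d⟩ := ih
    have d' : PGADeriv false (PGATerm.rep t) (PGATerm.rep t1) := PGADeriv.rep_congr d
    rcases hc with hrf | ⟨a, b, ha, hb, rfl⟩
    · exact ⟨PGATerm.concat t1 (PGATerm.rep t1), Or.inr ⟨_, _, hrf, hrf, rfl⟩,
        d'.trans (pga_unfold t1)⟩
    · refine ⟨PGATerm.concat a (PGATerm.rep b), Or.inr ⟨_, _, ha, hb, rfl⟩, d'.trans ?_⟩
      have h1 := PGADeriv.pga4 a (PGATerm.rep b) (full := false)
      have h2 : PGADeriv false (PGATerm.rep (PGATerm.concat (PGATerm.rep b) a))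
          (PGATerm.rep (PGATerm.rep b)) := PGADeriv.rep_congr (PGADeriv.pga3 b a)
      exact h1.trans (PGADeriv.concat_congr (PGADeriv.refl a) (h2.trans (pga_rep_rep b)))
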